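/- arXiv:2401.16109 — 6 statements merged into one kernel-verified Lean document; each statement's English description precedes it below -/
import Mathlib

section
/- Assume the interface of f and g is nonempty. Then there exists a runnable (i.e. nonempty-behaviour) composition of f and g if and only if there exists a compatible pair (x,y) ∈ Beh(f) × Beh(g). -/
/-- A system: a set of behaviours `B` together with a map into component snapshots. -/
structure System (Comp : Type) (Beh : Comp → Type) where
  B : Type
  C : Set Comp
  f : B → (c : Comp) → c ∈ C → Beh c

variable {Comp : Type} {Beh : Comp → Type}

/-- `σ` is an implementation of `g` in `f`: `Comp(g) ⊆ Comp(f)` and `f_{Comp(g)} = g ∘ σ`. -/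
def Implements (f g : System Comp Beh) (σ : f.B → g.B) : Prop :=
  g.C ⊆ f.C ∧ ∀ (b : f.B) (c : Comp) (hg : c ∈ g.C) (hf : c ∈ f.C),
    f.f b c hf = g.f (σ b) c hg
/-- `(x,y)` is compatible: the interface is empty or `f_I(x) = g_I(y)`. -/
def Compatible (f g : System Comp Beh) (x : f.B) (y : g.B) : Prop :=
  f.C ∩ g.C = ∅ ∨
    ∀ (c : Comp) (hf : c ∈ f.C) (hg : c ∈ g.C), f.f x c hf = g.f y c hg

open Classical in
/-- The canonical free composition `f ⊗ g`. -/
noncomputable def tensor (f g : System Comp Beh) : System Comp Beh where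
  B := {p : f.B × g.B // Compatible f g p.1 p.2}
  C := f.C ∪ g.C
  f := fun p c hc =>
    if hf : c ∈ f.C then f.f p.val.1 c hf
    else g.f p.val.2 c (Or.resolve_left hc hf)
/-- `h` is a composition of `f` and `g`. -/
def IsComposition (h f g : System Comp Beh) : Prop :=
  h.C = f.C ∪ g.C ∧ (∃ σ : h.B → f.B, Implements h f σ) ∧
    (∃ ρ : h.B → g.B, Implements h g ρ)

/-! A behaviour of any composition projects, through its two implementations, to a compatible
pair, because both projections agree with the composite on the interface. Conversely the
behaviours of `tensor f g` are exactly the compatible pairs, so one compatible pair makes it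
runnable. -/

theorem Compatible.eq_of_mem {f g : System Comp Beh} {x : f.B} {y : g.B}
    (hxy : Compatible f g x y) {c : Comp} (hf : c ∈ f.C) (hg : c ∈ g.C) :
    f.f x c hf = g.f y c hg :=
  hxy.elim (fun h0 => (Set.eq_empty_iff_forall_notMem.mp h0 c ⟨hf, hg⟩).elim) (· c hf hg)

theorem Implements.compatible {h f g : System Comp Beh} {σ : h.B → f.B} {ρ : h.B → g.B}
    (hσ : Implements h f σ) (hρ : Implements h g ρ) (b : h.B) :
    Compatible f g (σ b) (ρ b) :=
  Or.inr fun c hf hg => (hσ.2 b c hf (hσ.1 hf)).symm.trans (hρ.2 b c hg (hσ.1 hf))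

theorem implements_tensor_fst (f g : System Comp Beh) :
    Implements (tensor f g) f (fun p => p.val.1) :=
  ⟨Set.subset_union_left, fun _ _ hf _ => dif_pos hf⟩

theorem implements_tensor_snd (f g : System Comp Beh) :
    Implements (tensor f g) g (fun p => p.val.2) := by
  refine ⟨Set.subset_union_right, fun p c hg _ => ?_⟩
  by_cases hf : c ∈ f.C
  · exact (dif_pos hf).trans (p.prop.eq_of_mem hf hg)
  · exact dif_neg hf

theorem tensor_isComposition (f g : System Comp Beh) : IsComposition (tensor f g) f g :=
  ⟨rfl, ⟨_, implements_tensor_fst f g⟩, ⟨_, implements_tensor_snd f g⟩⟩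

theorem runnable_composition_iff_compatible_general (f g : System Comp Beh) :
    (∃ h : System Comp Beh, IsComposition h f g ∧ Nonempty h.B) ↔
      ∃ (x : f.B) (y : g.B), Compatible f g x y := by
  constructor
  · rintro ⟨h, ⟨-, ⟨σ, hσ⟩, ⟨ρ, hρ⟩⟩, ⟨b⟩⟩
    exact ⟨σ b, ρ b, hσ.compatible hρ b⟩
  · rintro ⟨x, y, hxy⟩
    exact ⟨tensor f g, tensor_isComposition f g, ⟨⟨(x, y), hxy⟩⟩⟩

/-- if the interface is nonempty, a runnable composition of `f`
and `g` exists iff a compatible pair exists. -/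
theorem runnable_composition_iff_compatible (f g : System Comp Beh)
    (hI : (f.C ∩ g.C).Nonempty) :
    (∃ h : System Comp Beh, IsComposition h f g ∧ Nonempty h.B) ↔
      ∃ (x : f.B) (y : g.B), Compatible f g x y :=
  runnable_composition_iff_compatible_general f g
end

section
/- Generalized CAP theorem: Let f implement g₁ via σ₁ and g₂ via σ₂, let C ⊆ Beh(f), and suppose R, S ⊆ Beh(f)² are C-entangled over (σ₁,σ₂). Then every runnable implementation σ : Beh(h) → Beh(f) of f violates at least one of: C-consistency, (strong R-availability and weak S-availability), (σ₁,σ₂)-partition-tolerance. -/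
variable {Comp : Type} {Beh : Comp → Type}

/-- `C`-consistency guarantee: only behaviours in `C` are realized. -/
def consistencyG {F : Type} (C : Set F) : Set (Set F) := {X | X ⊆ C}

/-- Strong `R`-availability guarantee. -/
def strongAvail {F : Type} (R : F → F → Prop) : Set (Set F) :=
  {X | ∀ x ∈ X, ∀ y, R x y → y ∈ X}

/-- Weak `R`-availability guarantee. -/
def weakAvail {F : Type} (R : F → F → Prop) : Set (Set F) :=
  {X | ∀ x ∈ X, (∃ y, R x y) → ∃ y ∈ X, R x y}

/-- `(σ₁,σ₂)`-partition-tolerance guarantee. -/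
def partTol {F G1 G2 : Type} (σ1 : F → G1) (σ2 : F → G2) : Set (Set F) :=
  {X | ∀ x1 ∈ X, ∀ x2 ∈ X, ∃ x ∈ X, σ1 x = σ1 x1 ∧ σ2 x = σ2 x2}

/-- `R` and `S` are `C`-entangled over `(σ₁,σ₂)`. -/
def Entangled {F G1 G2 : Type} (σ1 : F → G1) (σ2 : F → G2) (C : Set F)
    (R S : F → F → Prop) : Prop :=
  ∀ w, ∃ x, R w x ∧ (∃ v, S x v) ∧ ∀ v, S x v → ∀ y z,
    σ1 y = σ1 v → σ1 z = σ1 v → σ2 y = σ2 w → σ2 z = σ2 x → (y ∉ C ∨ z ∉ C)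

theorem Entangled.exists_mem_notMem {F G1 G2 : Type} {σ1 : F → G1} {σ2 : F → G2}
    {C : Set F} {R S : F → F → Prop} (hent : Entangled σ1 σ2 C R S) {X : Set F}
    (hX : X.Nonempty) (hR : X ∈ strongAvail R) (hS : X ∈ weakAvail S)
    (hP : X ∈ partTol σ1 σ2) : ∃ y ∈ X, y ∉ C := by
  obtain ⟨w, hw⟩ := hX
  obtain ⟨x, hwx, hx_dom, hsplit⟩ := hent w
  have hx : x ∈ X := hR w hw x hwx
  obtain ⟨v, hv, hxv⟩ := hS x hx hx_dom
  obtain ⟨y, hy, hyv, hyw⟩ := hP v hv w hw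
  obtain ⟨z, hz, hzv, hzx⟩ := hP v hv x hx
  rcases hsplit v hxv y z hyv hzv hyw hzx with hyC | hzC
  exacts [⟨y, hy, hyC⟩, ⟨z, hz, hzC⟩]

theorem generalized_CAP_general (f g1 g2 h : System Comp Beh)
    (σ1 : f.B → g1.B) (σ2 : f.B → g2.B)
    (C : Set f.B) (R S : f.B → f.B → Prop)
    (hent : Entangled σ1 σ2 C R S)
    (σ : h.B → f.B) (hrun : Nonempty h.B) :
    ¬ (Set.range σ ∈ consistencyG C ∧
       (Set.range σ ∈ strongAvail R ∧ Set.range σ ∈ weakAvail S) ∧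
       Set.range σ ∈ partTol σ1 σ2) := by
  rintro ⟨hC, ⟨hR, hS⟩, hP⟩
  obtain ⟨y, hy, hyC⟩ :=
    hent.exists_mem_notMem (Set.range_nonempty_iff_nonempty.mpr hrun) hR hS hP
  exact hyC (hC hy)

/-- generalized CAP theorem: if `R, S` are `C`-entangled over
`(σ₁,σ₂)`, then every runnable implementation of `f` violates `C`-consistency,
or (strong `R`- and weak `S`-availability), or `(σ₁,σ₂)`-partition-tolerance. -/
theorem generalized_CAP (f g1 g2 h : System Comp Beh)
    (σ1 : f.B → g1.B) (σ2 : f.B → g2.B)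
    (h1 : Implements f g1 σ1) (h2 : Implements f g2 σ2)
    (C : Set f.B) (R S : f.B → f.B → Prop)
    (hent : Entangled σ1 σ2 C R S)
    (σ : h.B → f.B) (himp : Implements h f σ) (hrun : Nonempty h.B) :
    ¬ (Set.range σ ∈ consistencyG C ∧
       (Set.range σ ∈ strongAvail R ∧ Set.range σ ∈ weakAvail S) ∧
       Set.range σ ∈ partTol σ1 σ2) :=
  generalized_CAP_general f g1 g2 h σ1 σ2 C R S hent σ hrun
end

section
/- Local reasoning I: Let g ←σ f →π h be implementations with I := Comp(g) ∩ Comp(h) nonempty and I ⊆ Comp(g), I ⊆ Comp(h). For α in the elementary logic over I and β in the elementary logic over Comp(h): if g,𝒱 ⊨ α and h,𝒱 ⊨ α → β, then f,𝒱 ⊨ β. -/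
variable {Comp : Type} {Beh : Comp → Type}

/-- Formulas of the modal logic `ℒ(C)^□` (atoms, ∧, ¬, □). -/
inductive Fml (Comp : Type) (Var : Comp → Type) : Type
  | atom (c : Comp) (p : Var c)
  | and (φ ψ : Fml Comp Var)
  | not (φ : Fml Comp Var)
  | box (φ : Fml Comp Var)

variable {Var : Comp → Type}

/-- Satisfaction `f, 𝒱, x ⊨ φ`. -/
def Sat (V : (c : Comp) → Var c → Set (Beh c)) (f : System Comp Beh) :
    f.B → Fml Comp Var → Prop
  | x, .atom c p => ∃ hc : c ∈ f.C, f.f x c hc ∈ V c p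
  | x, .and φ ψ => Sat V f x φ ∧ Sat V f x ψ
  | x, .not φ => ¬ Sat V f x φ
  | _, .box φ => ∀ y : f.B, Sat V f y φ

/-- The formula only uses atoms over the components in `C`. -/
def InLogic (C : Set Comp) : Fml Comp Var → Prop
  | .atom c _ => c ∈ C
  | .and φ ψ => InLogic C φ ∧ InLogic C ψ
  | .not φ => InLogic C φ
  | .box φ => InLogic C φ

/-- Formulas of the elementary logic: no `□`. -/
def Elementary : Fml Comp Var → Prop
  | .atom _ _ => True
  | .and φ ψ => Elementary φ ∧ Elementary ψ
  | .not φ => Elementary φ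
  | .box _ => False

/-- Classical implication `φ → ψ := ¬(φ ∧ ¬ψ)`. -/
def Fml.imp (φ ψ : Fml Comp Var) : Fml Comp Var := .not (.and φ (.not ψ))

/-- `f, 𝒱 ⊨ φ`: satisfaction at all behaviours. -/
def SatAll (V : (c : Comp) → Var c → Set (Beh c)) (f : System Comp Beh)
    (φ : Fml Comp Var) : Prop :=
  ∀ x : f.B, Sat V f x φ

/-! Implementations preserve satisfaction of `□`-free formulas over the implemented components.
So `α` travels from `g` to `f` along `σ` and on to `h` along `π`; modus ponens in `h` gives `β`
at `π x`, which travels back to `f`. -/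

theorem InLogic.mono {C D : Set Comp} (hCD : C ⊆ D) :
    ∀ {φ : Fml Comp Var}, InLogic C φ → InLogic D φ
  | .atom _ _, h => hCD h
  | .and φ ψ, h => ⟨InLogic.mono hCD (φ := φ) h.1, InLogic.mono hCD (φ := ψ) h.2⟩
  | .not φ, h | .box φ, h => InLogic.mono hCD (φ := φ) h

theorem sat_imp (V : (c : Comp) → Var c → Set (Beh c)) (f : System Comp Beh) (x : f.B)
    (φ ψ : Fml Comp Var) : Sat V f x (φ.imp ψ) ↔ (Sat V f x φ → Sat V f x ψ) := by
  simp only [Fml.imp, Sat, not_and, not_not]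

theorem Implements.sat_iff {f g : System Comp Beh} {σ : f.B → g.B} (hσ : Implements f g σ)
    (V : (c : Comp) → Var c → Set (Beh c)) (x : f.B) :
    ∀ {φ : Fml Comp Var}, Elementary φ → InLogic g.C φ → (Sat V f x φ ↔ Sat V g (σ x) φ)
  | .atom c _, _, (hc : c ∈ g.C) => by
    simp only [Sat, exists_prop_of_true hc, exists_prop_of_true (hσ.1 hc), hσ.2 x c hc (hσ.1 hc)]
  | .and _ _, hel, hlog => and_congr (hσ.sat_iff V x hel.1 hlog.1) (hσ.sat_iff V x hel.2 hlog.2)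
  | .not _, hel, hlog => not_congr (hσ.sat_iff V x hel hlog)
  | .box _, hel, _ => hel.elim

theorem local_reasoning_I_general (V : (c : Comp) → Var c → Set (Beh c))
    (f g h : System Comp Beh) (σ : f.B → g.B) (π : f.B → h.B)
    (hσ : Implements f g σ) (hπ : Implements f h π)
    (α β : Fml Comp Var)
    (hαel : Elementary α) (hαlog : InLogic (g.C ∩ h.C) α)
    (hβel : Elementary β) (hβlog : InLogic h.C β)
    (hgα : SatAll V g α) (hhαβ : SatAll V h (Fml.imp α β)) :
    SatAll V f β := by
  intro x
  have hfα : Sat V f x α :=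
    (hσ.sat_iff V x hαel (hαlog.mono Set.inter_subset_left)).2 (hgα (σ x))
  have hhα : Sat V h (π x) α :=
    (hπ.sat_iff V x hαel (hαlog.mono Set.inter_subset_right)).1 hfα
  exact (hπ.sat_iff V x hβel hβlog).2 ((sat_imp V h (π x) α β).1 (hhαβ (π x)) hhα)

/-- Local reasoning I: if `f` implements `g` and `h` with
nonempty interface `I = Comp(g) ∩ Comp(h)`, `α ∈ ℒ(I)`, `β ∈ ℒ(Comp(h))`,
`g,𝒱 ⊨ α` and `h,𝒱 ⊨ α → β`, then `f,𝒱 ⊨ β`. -/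
theorem local_reasoning_I (V : (c : Comp) → Var c → Set (Beh c))
    (f g h : System Comp Beh) (σ : f.B → g.B) (π : f.B → h.B)
    (hσ : Implements f g σ) (hπ : Implements f h π)
    (hI : (g.C ∩ h.C).Nonempty)
    (α β : Fml Comp Var)
    (hαel : Elementary α) (hαlog : InLogic (g.C ∩ h.C) α)
    (hβel : Elementary β) (hβlog : InLogic h.C β)
    (hgα : SatAll V g α) (hhαβ : SatAll V h (Fml.imp α β)) :
    SatAll V f β :=
  local_reasoning_I_general V f g h σ π hσ hπ α β hαel hαlog hβel hβlog hgα hhαβ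
end

section
/- Frame rule for disjoint composition: if Comp(g) ∩ Comp(h) = ∅, then for every β ∈ ℒ(Comp(h))^□ and every (x,y) ∈ Beh(g) × Beh(h) = Beh(g⊗h): g⊗h,𝒱,(x,y) ⊨ β if and only if h,𝒱,y ⊨ β. In particular, h,𝒱 ⊨ β implies g⊗h,𝒱 ⊨ β. -/
variable {Comp : Type} {Beh : Comp → Type}

variable {Var : Comp → Type}

namespace System

variable (V : (c : Comp) → Var c → Set (Beh c)) {g h : System Comp Beh}

theorem tensor_f_of_notMem_left (p : (tensor g h).B) {c : Comp} (hcg : c ∉ g.C)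
    (hch : c ∈ h.C) (hc : c ∈ (tensor g h).C) :
    (tensor g h).f p c hc = h.f p.val.2 c hch := by
  simp [tensor, hcg]

theorem tensor_snd_surjective (hdisj : g.C ∩ h.C = ∅) [Nonempty g.B] :
    Function.Surjective fun p : (tensor g h).B => p.val.2 :=
  fun y => ⟨⟨(Classical.arbitrary g.B, y), Or.inl hdisj⟩, rfl⟩

theorem sat_tensor_iff_of_disjoint (hdisj : g.C ∩ h.C = ∅) [Nonempty g.B]
    {β : Fml Comp Var} (hβ : InLogic h.C β) (p : (tensor g h).B) :
    Sat V (tensor g h) p β ↔ Sat V h p.val.2 β := by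
  induction β generalizing p with
  | atom c q =>
    have hcg : c ∉ g.C := fun hcg => hdisj.subset ⟨hcg, hβ⟩
    exact ⟨fun ⟨hc, hV⟩ => ⟨hβ, tensor_f_of_notMem_left p hcg hβ hc ▸ hV⟩,
      fun ⟨_, hV⟩ => ⟨Or.inr hβ, (tensor_f_of_notMem_left p hcg hβ _).symm ▸ hV⟩⟩
  | and φ ψ ihφ ihψ => exact and_congr (ihφ hβ.1 p) (ihψ hβ.2 p)
  | not φ ih => exact not_congr (ih hβ p)
  | box φ ih =>
    simp only [Sat]
    exact (forall_congr' fun q => ih hβ q).trans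
      ((tensor_snd_surjective hdisj).forall (p := (Sat V h · φ))).symm

end System

/-- frame rule for disjoint composition: if
`Comp(g) ∩ Comp(h) = ∅` and `β ∈ ℒ(Comp(h))^□`, then for every behaviour
`(x,y)` of `g ⊗ h`, `g⊗h,𝒱,(x,y) ⊨ β` iff `h,𝒱,y ⊨ β`; in particular
`h,𝒱 ⊨ β` implies `g⊗h,𝒱 ⊨ β`. -/
theorem frame_rule (V : (c : Comp) → Var c → Set (Beh c))
    (g h : System Comp Beh) (hdisj : g.C ∩ h.C = ∅) (hg : Nonempty g.B)
    (β : Fml Comp Var) (hβlog : InLogic h.C β) :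
    (∀ p : (tensor g h).B, Sat V (tensor g h) p β ↔ Sat V h p.val.2 β) ∧
    (SatAll V h β → SatAll V (tensor g h) β) :=
  ⟨System.sat_tensor_iff_of_disjoint V hdisj hβlog,
    fun hsat p => (System.sat_tensor_iff_of_disjoint V hdisj hβlog p).mpr (hsat p.val.2)⟩
end

section
/- Hennessy–Milner theorem, modal part: let f, g be systems with the same component set C and Var(C) finite. For x ∈ Beh(f), y ∈ Beh(g), the following are equivalent: (1) for all φ ∈ ℒ(C)^□, f,x ⊨ φ iff g,y ⊨ φ; (2) tp(x) = tp(y) and tps(f) = tps(g), where tp(x) = {p ∈ Var(C) : f,x ⊨ p} and tps(f) = {tp(x') : x' ∈ Beh(f)}. -/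
variable {Comp : Type} {Beh : Comp → Type}

variable {Var : Comp → Type}

/-- The type of `x`: the set of atomic formulas satisfied at `x`. -/
def tp (V : (c : Comp) → Var c → Set (Beh c)) (f : System Comp Beh) (x : f.B) :
    Set ((c : Comp) × Var c) :=
  {a | Sat V f x (Fml.atom a.1 a.2)}

/-- The set of types realized in `f`. -/
def tps (V : (c : Comp) → Var c → Set (Beh c)) (f : System Comp Beh) :
    Set (Set ((c : Comp) × Var c)) :=
  {D | ∃ x : f.B, tp V f x = D}

/-!
Direction (2)⇒(1) is an induction on formulas: atoms are settled by `tp x = tp y`, and a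
`□φ` at `x` is transferred to any `y'` by picking `x'` of the same type, which exists since
`tps f = tps g`. For (1)⇒(2), as `Var(C)` is finite every type `D` has a characteristic
formula `φ_D`, a conjunction of literals, and `¬□¬φ_D` holds exactly in the systems that
realize `D`.
-/

section HennessyMilner

variable {V : (c : Comp) → Var c → Set (Beh c)} {f g : System Comp Beh}

theorem comp_mem_of_mem_tp {z : f.B} {a : (c : Comp) × Var c} (h : a ∈ tp V f z) :
    a.1 ∈ f.C :=
  h.1

theorem sat_iff_of_tps_eq_of_tp_eq (htps : tps V f = tps V g) (φ : Fml Comp Var) :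
    ∀ {x : f.B} {y : g.B}, tp V f x = tp V g y → (Sat V f x φ ↔ Sat V g y φ) := by
  induction φ with
  | atom c p => exact fun htp => Set.ext_iff.mp htp ⟨c, p⟩
  | and φ ψ ihφ ihψ => exact fun htp => and_congr (ihφ htp) (ihψ htp)
  | not φ ih => exact fun htp => not_congr (ih htp)
  | box φ ih =>
    intro _ _ _
    constructor
    · intro hf y'
      obtain ⟨x', hx'⟩ : tp V g y' ∈ tps V f := htps ▸ ⟨y', rfl⟩
      exact (ih hx').mp (hf x')
    · intro hg x'
      obtain ⟨y', hy'⟩ : tp V f x' ∈ tps V g := htps ▸ ⟨x', rfl⟩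
      exact (ih hy'.symm).mpr (hg y')

open Classical in
noncomputable def Fml.literal (D : Set ((c : Comp) × Var c)) (a : (c : Comp) × Var c) :
    Fml Comp Var :=
  if a ∈ D then .atom a.1 a.2 else .not (.atom a.1 a.2)

/-- The characteristic formula of `D` over the atoms `a₀ :: l`; the list is nonempty since
`Fml` has no constant for the empty conjunction. -/
noncomputable def Fml.characteristic (D : Set ((c : Comp) × Var c)) :
    (c : Comp) × Var c → List ((c : Comp) × Var c) → Fml Comp Var
  | a₀, [] => literal D a₀
  | a₀, a :: l => .and (literal D a₀) (characteristic D a l)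

theorem sat_literal {z : f.B} {D : Set ((c : Comp) × Var c)} {a : (c : Comp) × Var c} :
    Sat V f z (Fml.literal D a) ↔ (a ∈ D ↔ a ∈ tp V f z) := by
  unfold Fml.literal
  split_ifs with ha <;> simp [Sat, tp, ha]

theorem sat_characteristic {z : f.B} {D : Set ((c : Comp) × Var c)} (a₀ : (c : Comp) × Var c)
    (l : List ((c : Comp) × Var c)) :
    Sat V f z (Fml.characteristic D a₀ l) ↔ ∀ a ∈ a₀ :: l, (a ∈ D ↔ a ∈ tp V f z) := by
  induction l generalizing a₀ with
  | nil => simp [Fml.characteristic, sat_literal]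
  | cons a l ih =>
    rw [List.forall_mem_cons, ← ih]
    exact and_congr sat_literal Iff.rfl

theorem sat_characteristic_iff_tp_eq {z : f.B} {D : Set ((c : Comp) × Var c)}
    {a₀ : (c : Comp) × Var c} {l : List ((c : Comp) × Var c)}
    (hl : ∀ a : (c : Comp) × Var c, a.1 ∈ f.C → a ∈ a₀ :: l) (hD : ∀ a ∈ D, a.1 ∈ f.C) :
    Sat V f z (Fml.characteristic D a₀ l) ↔ tp V f z = D := by
  rw [sat_characteristic]
  refine ⟨fun h => Set.ext fun a => ?_, fun h a _ => h ▸ Iff.rfl⟩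
  by_cases ha : a.1 ∈ f.C
  · exact (h a (hl a ha)).symm
  · exact iff_of_false (ha ∘ comp_mem_of_mem_tp) (ha ∘ hD a)

theorem inLogic_literal {C : Set Comp} (D : Set ((c : Comp) × Var c))
    {a : (c : Comp) × Var c} (ha : a.1 ∈ C) : InLogic C (Fml.literal D a) := by
  unfold Fml.literal
  split_ifs <;> exact ha

theorem inLogic_characteristic {C : Set Comp} (D : Set ((c : Comp) × Var c))
    (a₀ : (c : Comp) × Var c) (l : List ((c : Comp) × Var c)) (hl : ∀ a ∈ a₀ :: l, a.1 ∈ C) :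
    InLogic C (Fml.characteristic D a₀ l) := by
  induction l generalizing a₀ with
  | nil => exact inLogic_literal D (hl a₀ List.mem_cons_self)
  | cons a l ih =>
    rw [List.forall_mem_cons] at hl
    exact ⟨inLogic_literal D hl.1, ih a hl.2⟩

theorem tp_eq_of_sat_atom_iff {C : Set Comp} (hf : f.C = C) (hg : g.C = C) {x : f.B} {y : g.B}
    (h : ∀ a : (c : Comp) × Var c, a.1 ∈ C →
      (Sat V f x (.atom a.1 a.2) ↔ Sat V g y (.atom a.1 a.2))) :
    tp V f x = tp V g y := by
  ext a
  by_cases ha : a.1 ∈ C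
  · exact h a ha
  · exact iff_of_false (fun h => ha (hf ▸ comp_mem_of_mem_tp h))
      (fun h => ha (hg ▸ comp_mem_of_mem_tp h))

theorem tps_subset_of_sat_imp {C : Set Comp} (hf : f.C = C) (hg : g.C = C)
    {l : List ((c : Comp) × Var c)} (hl : ∀ a, a ∈ l ↔ a.1 ∈ C) {x : f.B} {y : g.B}
    (h : ∀ φ : Fml Comp Var, InLogic C φ → Sat V f x φ → Sat V g y φ) :
    tps V f ⊆ tps V g := by
  rintro _ ⟨z, rfl⟩
  cases l with
  | nil =>
    refine ⟨y, tp_eq_of_sat_atom_iff hg hf fun a ha => ?_⟩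
    exact absurd ((hl a).mpr ha) List.not_mem_nil
  | cons a₀ l =>
    have hl' : ∀ a : (c : Comp) × Var c, a.1 ∈ C → a ∈ a₀ :: l := fun a => (hl a).mpr
    have hD : ∀ a ∈ tp V f z, a.1 ∈ C := fun a ha => hf ▸ comp_mem_of_mem_tp ha
    have hsat := h (.not (.box (.not (Fml.characteristic (tp V f z) a₀ l))))
      (inLogic_characteristic _ a₀ l fun a => (hl a).mp)
      fun hbox => hbox z ((sat_characteristic_iff_tp_eq (hf ▸ hl') (hf ▸ hD)).mpr rfl)
    simp only [Sat, not_forall, not_not] at hsat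
    obtain ⟨w, hw⟩ := hsat
    exact ⟨w, (sat_characteristic_iff_tp_eq (hg ▸ hl') (hg ▸ hD)).mp hw⟩

end HennessyMilner

/-- Hennessy–Milner, modal part: for systems with the same
component set `C` and `Var(C)` finite, two behaviours satisfy the same
`ℒ(C)^□`-formulas iff they have the same type and the two systems realize the
same sets of types. -/
theorem hennessy_milner_modal (V : (c : Comp) → Var c → Set (Beh c))
    (C : Set Comp) (f g : System Comp Beh) (hf : f.C = C) (hg : g.C = C)
    (hfin : {a : (c : Comp) × Var c | a.1 ∈ C}.Finite)
    (x : f.B) (y : g.B) :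
    (∀ φ : Fml Comp Var, InLogic C φ → (Sat V f x φ ↔ Sat V g y φ)) ↔
      (tp V f x = tp V g y ∧ tps V f = tps V g) := by
  obtain ⟨l, hl⟩ : ∃ l : List ((c : Comp) × Var c), ∀ a, a ∈ l ↔ a.1 ∈ C :=
    ⟨hfin.toFinset.toList, by simp⟩
  constructor
  · intro h
    refine ⟨tp_eq_of_sat_atom_iff hf hg fun a ha => h _ ha, ?_⟩
    exact (tps_subset_of_sat_imp hf hg hl fun φ hφ => (h φ hφ).mp).antisymm
      (tps_subset_of_sat_imp hg hf hl fun φ hφ => (h φ hφ).mpr)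
  · rintro ⟨htp, htps⟩ φ -
    exact sat_iff_of_tps_eq_of_tp_eq htps φ htp
end

section
/- CAP instance via entanglement: in the two-user replicated database model, the relations R (appending a write by user 2 with a fresh value) and S (appending a read request by user 1, a finite string of user-2 actions, and a read response to user 1) are C-entangled over (σ₁, σ₂), where C is the set of consistent sequences and σ_i projects a well-formed sequence onto the actions of user i. -/
/-- Timestamped actions of the two-user replicated database: read requests,
read responses, and writes (user `0` is "user 1", user `1` is "user 2"). -/
inductive Act : Type
  | rdReq (u : Fin 2) (t : ℚ)
  | rd (u : Fin 2) (t : ℚ) (s : String)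
  | wr (u : Fin 2) (t : ℚ) (s : String)
  deriving DecidableEq

/-- The timestamp of an action. -/
def Act.time : Act → ℚ
  | .rdReq _ t => t
  | .rd _ t _ => t
  | .wr _ t _ => t

/-- The user initiating an action. -/
def Act.user : Act → Fin 2
  | .rdReq u _ => u
  | .rd u _ _ => u
  | .wr u _ _ => u

/-- Well-formed sequences: timestamps are nonnegative and strictly ascending. -/
def WF (l : List Act) : Prop :=
  l.Pairwise (fun a b => a.time < b.time) ∧ ∀ a ∈ l, 0 ≤ a.time

/-- The set `𝒮` of well-formed sequences. -/
def WSeq : Type := {l : List Act // WF l}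

/-- Projection onto the actions of user `i`. -/
def projList (i : Fin 2) (l : List Act) : List Act :=
  l.filter (fun a => decide (a.user = i))

theorem WF.proj {l : List Act} (h : WF l) (i : Fin 2) : WF (projList i l) :=
  ⟨h.1.sublist List.filter_sublist,
   fun a ha => h.2 a (List.mem_of_mem_filter ha)⟩

/-- `σᵢ : 𝒮 → 𝒮`, deleting all actions of the other user. -/
def σp (i : Fin 2) (w : WSeq) : WSeq := ⟨projList i w.val, w.prop.proj i⟩

/-- The current value at time `t`: the value of the latest write with
timestamp `≤ t` (the last such in list order), or `s0` if there is none. -/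
def lastWriteVal (s0 : String) (t : ℚ) : List Act → String
  | [] => s0
  | Act.wr _ t' s :: rest =>
      if t' ≤ t then lastWriteVal s t rest else lastWriteVal s0 t rest
  | _ :: rest => lastWriteVal s0 t rest

/-- Consistency: for every pair `t:rd^u?` and `t':rd^u(s)` with `t < t'` and no
read by user `u` strictly in between, `s` is the current value at some
timestamp in `[t, t']`. -/
def Consistent (s0 : String) (l : List Act) : Prop :=
  ∀ (i j : ℕ) (hi : i < l.length) (hj : j < l.length), i < j →
    ∀ (u : Fin 2) (t t' : ℚ) (s : String),
      l[i] = Act.rdReq u t → l[j] = Act.rd u t' s →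
      (∀ (k : ℕ) (hk : k < l.length), i < k → k < j →
        ∀ (t'' : ℚ) (s'' : String), l[k] ≠ Act.rd u t'' s'') →
      t < t' →
      ∃ τ : ℚ, t ≤ τ ∧ τ ≤ t' ∧ s = lastWriteVal s0 τ l

/-- `R` relates `w` to `w` appended with a write `t:wr²(s)` by user 2, for any
value `s` and any `t` larger than all timestamps in `w`. -/
def Rrel (w x : WSeq) : Prop :=
  ∃ (t : ℚ) (s : String), (∀ a ∈ w.val, a.time < t) ∧
    x.val = w.val ++ [Act.wr 1 t s]

/-- `S` relates `x` to `x` appended with a read request `t:rd¹?` by user 1,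
finitely many user-2 actions, and a read response `t'':rd¹(s')` to user 1. -/
def Srel (x v : WSeq) : Prop :=
  ∃ (t t'' : ℚ) (s' : String) (mid : List Act),
    (∀ a ∈ mid, a.user = 1) ∧
    v.val = x.val ++ Act.rdReq 0 t :: (mid ++ [Act.rd 0 t'' s'])

/-! Take `x` to be `w` followed by a user-2 write of a value `s` that is neither `s0` nor written in
`w`. Timestamps are distinct, so a well-formed sequence is determined by its two projections: `y`
is `w` followed by user 1's read pair and `z` is `x` followed by it. In `y` the response can only
be `s0` or a value written in `w`, while in `z` the write of `s` precedes the read request, so a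
consistent response must be `s`. -/

def writeVals : List Act → List String
  | [] => []
  | Act.wr _ _ s :: rest => s :: writeVals rest
  | _ :: rest => writeVals rest

lemma lastWriteVal_append (c : String) (τ : ℚ) (l l' : List Act) :
    lastWriteVal c τ (l ++ l') = lastWriteVal (lastWriteVal c τ l) τ l' := by
  induction l generalizing c with
  | nil => rfl
  | cons a l ih =>
    cases a <;> simp only [List.cons_append, lastWriteVal] <;> (try split_ifs) <;> apply ih

lemma lastWriteVal_mem (c : String) (τ : ℚ) (l : List Act) :
    lastWriteVal c τ l ∈ c :: writeVals l := by
  induction l generalizing c with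
  | nil => exact List.mem_singleton_self c
  | cons a l ih =>
    cases a with
    | wr u t s =>
      simp only [lastWriteVal, writeVals]
      split_ifs
      · exact List.mem_cons_of_mem _ (ih s)
      · exact List.cons_subset_cons c (List.subset_cons_self s _) (ih c)
    | _ => exact ih c

lemma exists_time_gt (l : List Act) : ∃ t : ℚ, 0 ≤ t ∧ ∀ a ∈ l, a.time < t := by
  induction l with
  | nil => exact ⟨0, le_rfl, by simp⟩
  | cons a l ih =>
    obtain ⟨t, ht0, ht⟩ := ih
    refine ⟨max t (a.time + 1), ht0.trans (le_max_left _ _), ?_⟩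
    simp only [List.mem_cons, forall_eq_or_imp, lt_max_iff]
    exact ⟨Or.inr (lt_add_one _), fun b hb => Or.inl (ht b hb)⟩

lemma WF.append {l l' : List Act} (hl : WF l) (hl' : WF l')
    (h : ∀ a ∈ l, ∀ b ∈ l', a.time < b.time) : WF (l ++ l') :=
  ⟨List.pairwise_append.2 ⟨hl.1, hl'.1, h⟩, by simpa [or_imp, forall_and] using ⟨hl.2, hl'.2⟩⟩

lemma exists_Rrel_write (w : WSeq) (s : String) :
    ∃ x t, Rrel w x ∧ x.val = w.val ++ [Act.wr 1 t s] := by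
  obtain ⟨t, ht0, ht⟩ := exists_time_gt w.val
  have hwf : WF [Act.wr 1 t s] := by simp [WF, Act.time, ht0]
  exact ⟨⟨_, w.prop.append hwf (by simpa [Act.time] using ht)⟩, t, ⟨t, s, ht, rfl⟩, rfl⟩

lemma exists_Srel (x : WSeq) : ∃ v, Srel x v := by
  obtain ⟨t, ht0, ht⟩ := exists_time_gt x.val
  have hwf : WF [Act.rdReq 0 t, Act.rd 0 (t + 1) default] := by
    simp [WF, Act.time, ht0]; linarith
  have hlt : ∀ a ∈ x.val, ∀ b ∈ [Act.rdReq 0 t, Act.rd 0 (t + 1) default], a.time < b.time := by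
    simp only [List.mem_cons, List.not_mem_nil, or_false, forall_eq_or_imp,
      forall_eq, Act.time]
    exact fun a ha => ⟨ht a ha, (ht a ha).trans (lt_add_one t)⟩
  exact ⟨⟨_, x.prop.append hwf hlt⟩, t, t + 1, default, [], by simp, rfl⟩

@[simp]
lemma projList_nil (i : Fin 2) : projList i [] = [] := rfl

@[simp]
lemma projList_cons (i : Fin 2) (a : Act) (l : List Act) :
    projList i (a :: l) = if a.user = i then a :: projList i l else projList i l := by
  by_cases h : a.user = i <;> simp [projList, h]

@[simp]
lemma projList_append (i : Fin 2) (l l' : List Act) :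
    projList i (l ++ l') = projList i l ++ projList i l' :=
  List.filter_append ..

lemma projList_append_perm (l : List Act) : (projList 0 l ++ projList 1 l).Perm l := by
  have hcompl : l.filter (fun a => !decide (a.user = 0)) = projList 1 l :=
    List.filter_congr fun a _ => by
      rcases Fin.exists_fin_two.mp ⟨a.user, rfl⟩ with h | h <;> simp [h]
  simpa only [projList, hcompl] using List.filter_append_perm (fun a => decide (a.user = 0)) l

lemma eq_of_projList_eq {l₁ l₂ : List Act}
    (h₁ : l₁.Pairwise (·.time < ·.time)) (h₂ : l₂.Pairwise (·.time < ·.time))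
    (h0 : projList 0 l₁ = projList 0 l₂) (h1 : projList 1 l₁ = projList 1 l₂) : l₁ = l₂ := by
  have hperm : l₁.Perm l₂ :=
    (projList_append_perm l₁).symm.trans (h0 ▸ h1 ▸ projList_append_perm l₂)
  exact hperm.eq_of_pairwise (fun _ _ _ _ hab hba => absurd hba (lt_asymm hab)) h₁ h₂

lemma projList_eq_of_σp_eq {i : Fin 2} {a b : WSeq} (h : σp i a = σp i b) :
    projList i a.val = projList i b.val :=
  congrArg Subtype.val h

lemma Consistent.exists_of_append_pair {s0 s : String} {l : List Act} {u : Fin 2} {t t' : ℚ}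
    (h : Consistent s0 (l ++ [Act.rdReq u t, Act.rd u t' s])) (htt' : t < t') :
    ∃ τ, t ≤ τ ∧ τ ≤ t' ∧ s = lastWriteVal s0 τ (l ++ [Act.rdReq u t, Act.rd u t' s]) :=
  h l.length (l.length + 1) (by simp) (by simp) (lt_add_one _) u t t' s (by simp)
    (by simp [List.getElem_cons]) (fun _ _ hlo hhi => by omega) htt'

theorem not_consistent_read_after_fresh_write {s0 s s' : String} {w : List Act} {u u' : Fin 2}
    {t t₁ t₃ : ℚ} (hs : s ∉ s0 :: writeVals w) (ht : t ≤ t₁) (ht₁₃ : t₁ < t₃)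
    (hy : Consistent s0 (w ++ [Act.rdReq u t₁, Act.rd u t₃ s']))
    (hz : Consistent s0 (w ++ [Act.wr u' t s] ++ [Act.rdReq u t₁, Act.rd u t₃ s'])) : False := by
  obtain ⟨τ, -, -, hτ⟩ := hy.exists_of_append_pair ht₁₃
  obtain ⟨τ', ht₁τ', -, hτ'⟩ := hz.exists_of_append_pair ht₁₃
  have hold : s' ∈ s0 :: writeVals w := by
    rw [hτ, lastWriteVal_append]
    exact lastWriteVal_mem s0 τ w
  have hnew : s' = s := by
    rw [hτ', lastWriteVal_append, lastWriteVal_append]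
    simp [lastWriteVal, ht.trans ht₁τ']
  exact hs (hnew ▸ hold)

/-- CAP instance: in the two-user replicated database model, the
relations `R` and `S` are `C`-entangled over `(σ₁, σ₂)`, where `C` is the set
of consistent sequences. -/
theorem cap_instance_entangled (s0 : String) :
    Entangled (σp 0) (σp 1) {w : WSeq | Consistent s0 w.val} Rrel Srel := by
  intro w
  obtain ⟨s, hs⟩ := Infinite.exists_notMem_finset (s0 :: writeVals w.val).toFinset
  obtain ⟨x, t, hRx, hx⟩ := exists_Rrel_write w s
  refine ⟨x, hRx, exists_Srel x, ?_⟩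
  rintro v ⟨t₁, t₃, s', mid, hmid, hv⟩ y z hy0 hz0 hy1 hz1
  rw [hx] at hv
  have hsorted := hv ▸ v.prop.1
  have hmid0 : projList 0 mid = [] := List.filter_eq_nil_iff.2 fun a ha => by simp [hmid a ha]
  have hY : y.val = w.val ++ [Act.rdReq 0 t₁, Act.rd 0 t₃ s'] :=
    eq_of_projList_eq y.prop.1 (hsorted.sublist (by simp))
      (by simp [projList_eq_of_σp_eq hy0, hv, hmid0, Act.user])
      (by simp [projList_eq_of_σp_eq hy1, Act.user])
  have hZ : z.val = w.val ++ [Act.wr 1 t s] ++ [Act.rdReq 0 t₁, Act.rd 0 t₃ s'] :=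
    eq_of_projList_eq z.prop.1 (hsorted.sublist (by simp))
      (by simp [projList_eq_of_σp_eq hz0, hv, hmid0, Act.user])
      (by simp [projList_eq_of_σp_eq hz1, hx, Act.user])
  have ht : (t < t₁ ∧ t < t₃) ∧ t₁ < t₃ := by
    simpa [Act.time] using hsorted.sublist (l₁ := [Act.wr 1 t s, Act.rdReq 0 t₁, Act.rd 0 t₃ s'])
      (by simp)
  simp only [Set.mem_ofPred_eq, hY, hZ, ← not_and_or]
  exact fun ⟨hyC, hzC⟩ =>
    not_consistent_read_after_fresh_write (by simpa using hs) ht.1.1.le ht.2 hyC hzC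
end
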